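/- With the construction above and α_1 + α_2 + α_3 = 0, for every decomposable tensor x = u⊗v⊗w ∈ V^{⊗3} one has [[x,x],x] = 0, and consequently [[x,x],x] = 0 for every x ∈ V^{⊗3}; thus (sl_2^{⊕3}) ⊕ V^{⊗3} is a Lie superalgebra. -/

import Mathlib

/-!
The element `[[x,x],x]` depends linearly on `α`: it is `α₁ A₁(x) + α₂ A₂(x) + α₃ A₃(x)`,
where `Aᵢ(x)` is the contribution of the `i`-th copy of `sl₂`, i.e. its value at `α = eᵢ`.
Because `V` is two-dimensional, the three contributions coincide (a Fierz-type identity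
among cubic expressions in the coordinates of `x`), so `[[x,x],x] = (α₁ + α₂ + α₃) A₁(x)`
vanishes for every `x`, decomposable or not.
-/

namespace Stmt13

variable (k : Type*) [Field k]

/-- The matrix of the skew form. -/
def J : Matrix (Fin 2) (Fin 2) k := !![0, 1; -1, 0]

/-- The three-fold tensor cube of `V`, via coefficient arrays. -/
abbrev W (k : Type*) := Fin 2 → Fin 2 → Fin 2 → k

/-- First component of the bracket: bilinear extension of
`(u⊗v⊗w, u'⊗v'⊗w') ↦ ⟨v,v'⟩⟨w,w'⟩ · uu'` (with `uu' = (1/2)(u u'ᵀ + u' uᵀ)`). -/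
def comp1 (x y : W k) : Matrix (Fin 2) (Fin 2) k :=
  Matrix.of fun a b => (1 / 2) *
    ∑ j, ∑ j', ∑ l, ∑ l',
      J k j j' * J k l l' * (x a j l * y b j' l' + x b j l * y a j' l')

/-- Second component: the form on factors 1 and 3, `vv'` from factor 2. -/
def comp2 (x y : W k) : Matrix (Fin 2) (Fin 2) k :=
  Matrix.of fun a b => (1 / 2) *
    ∑ i, ∑ i', ∑ l, ∑ l',
      J k i i' * J k l l' * (x i a l * y i' b l' + x i b l * y i' a l')

/-- Third component: the form on factors 1 and 2, `ww'` from factor 3. -/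
def comp3 (x y : W k) : Matrix (Fin 2) (Fin 2) k :=
  Matrix.of fun a b => (1 / 2) *
    ∑ i, ∑ i', ∑ j, ∑ j',
      J k i i' * J k j j' * (x i j a * y i' j' b + x i j b * y i' j' a)

/-- The bracket `W × W → sl₂^{⊕3}`. -/
def br (α₁ α₂ α₃ : k) (x y : W k) :
    Matrix (Fin 2) (Fin 2) k × Matrix (Fin 2) (Fin 2) k × Matrix (Fin 2) (Fin 2) k :=
  (α₁ • comp1 k x y, α₂ • comp2 k x y, α₃ • comp3 k x y)

/-- The factor-wise action of `sl₂^{⊕3}` on `W`, each copy of `Sym²(V)` acting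
by `w ↦ S J w` on its tensor factor. -/
def actg (S : Matrix (Fin 2) (Fin 2) k × Matrix (Fin 2) (Fin 2) k ×
    Matrix (Fin 2) (Fin 2) k) (x : W k) : W k :=
  fun i j l =>
    (∑ a, (S.1 * J k) i a * x a j l) + (∑ a, (S.2.1 * J k) j a * x i a l) +
      (∑ a, (S.2.2 * J k) l a * x i j a)

/-- The decomposable tensor `u ⊗ v ⊗ w`. -/
def dec (u v w : Fin 2 → k) : W k := fun i j l => u i * v j * w l

end Stmt13

namespace Stmt13

variable {k : Type*} [Field k]

lemma actg_add_left (S S' : Matrix (Fin 2) (Fin 2) k × Matrix (Fin 2) (Fin 2) k ×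
    Matrix (Fin 2) (Fin 2) k) (x : W k) : actg k (S + S') x = actg k S x + actg k S' x := by
  funext i j l
  simp only [actg, Prod.fst_add, Prod.snd_add, Matrix.add_apply, add_mul,
    Finset.sum_add_distrib, Pi.add_apply]
  ring

lemma actg_smul_left (c : k) (S : Matrix (Fin 2) (Fin 2) k × Matrix (Fin 2) (Fin 2) k ×
    Matrix (Fin 2) (Fin 2) k) (x : W k) : actg k (c • S) x = c • actg k S x := by
  funext i j l
  simp only [actg, Prod.smul_fst, Prod.smul_snd, Matrix.smul_mul, Matrix.smul_apply,
    smul_eq_mul, Pi.smul_apply, mul_assoc, ← Finset.mul_sum, mul_add]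

lemma br_eq_sum_smul (α₁ α₂ α₃ : k) (x y : W k) :
    br k α₁ α₂ α₃ x y =
      α₁ • br k 1 0 0 x y + α₂ • br k 0 1 0 x y + α₃ • br k 0 0 1 x y := by
  simp [br]

lemma actg_br_self_eq_sum_smul (α₁ α₂ α₃ : k) (x : W k) :
    actg k (br k α₁ α₂ α₃ x x) x =
      α₁ • actg k (br k 1 0 0 x x) x + α₂ • actg k (br k 0 1 0 x x) x +
        α₃ • actg k (br k 0 0 1 x x) x := by
  rw [br_eq_sum_smul, actg_add_left, actg_add_left, actg_smul_left, actg_smul_left,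
    actg_smul_left]

lemma actg_br_self_first_eq_second (x : W k) :
    actg k (br k 1 0 0 x x) x = actg k (br k 0 1 0 x x) x := by
  funext i j l
  fin_cases i <;> fin_cases j <;> fin_cases l <;>
    simp only [actg, br, comp1, comp2, J, Matrix.mul_apply, Fin.sum_univ_two, Matrix.of_apply,
      Matrix.cons_val', Matrix.cons_val_zero, Matrix.cons_val_one, Matrix.empty_val',
      Matrix.cons_val_fin_one, Fin.mk_zero, Fin.mk_one, one_smul, zero_smul, Matrix.zero_apply,
      zero_mul, Finset.sum_const_zero, add_zero, zero_add] <;>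
    ring

lemma actg_br_self_second_eq_third (x : W k) :
    actg k (br k 0 1 0 x x) x = actg k (br k 0 0 1 x x) x := by
  funext i j l
  fin_cases i <;> fin_cases j <;> fin_cases l <;>
    simp only [actg, br, comp2, comp3, J, Matrix.mul_apply, Fin.sum_univ_two, Matrix.of_apply,
      Matrix.cons_val', Matrix.cons_val_zero, Matrix.cons_val_one, Matrix.empty_val',
      Matrix.cons_val_fin_one, Fin.mk_zero, Fin.mk_one, one_smul, zero_smul, Matrix.zero_apply,
      zero_mul, Finset.sum_const_zero, add_zero, zero_add] <;>
    ring

end Stmt13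

open Stmt13 in
theorem stmt13_general (k : Type*) [Field k] (α₁ α₂ α₃ : k)
    (hsum : α₁ + α₂ + α₃ = 0) :
    (∀ u v w : Fin 2 → k,
      actg k (br k α₁ α₂ α₃ (dec k u v w) (dec k u v w)) (dec k u v w) = 0) ∧
    (∀ x : W k, actg k (br k α₁ α₂ α₃ x x) x = 0) := by
  have cube_eq_zero (x : W k) : actg k (br k α₁ α₂ α₃ x x) x = 0 := by
    rw [actg_br_self_eq_sum_smul, ← actg_br_self_second_eq_third,
      ← actg_br_self_first_eq_second, ← add_smul, ← add_smul, hsum, zero_smul]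
  exact ⟨fun u v w => cube_eq_zero _, cube_eq_zero⟩

open Stmt13 in
theorem stmt13 (k : Type*) [Field k] (hk : ringChar k ≠ 2) (α₁ α₂ α₃ : k)
    (hsum : α₁ + α₂ + α₃ = 0) :
    (∀ u v w : Fin 2 → k,
      actg k (br k α₁ α₂ α₃ (dec k u v w) (dec k u v w)) (dec k u v w) = 0) ∧
    (∀ x : W k, actg k (br k α₁ α₂ α₃ x x) x = 0) :=
  stmt13_general k α₁ α₂ α₃ hsum
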